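/- arXiv:1108.3809 — 2 statements merged into one kernel-verified Lean document; each statement's English description precedes it below -/
import Mathlib

section
/- Let H_n = (E[Q])^α (1-ρ)^{-α} Σ_{k=0}^n ρ_α^k (1-ρ^{n-k})^α with 0 < ρ < 1, 0 ≤ ρ_α < 1, α > 1 and E[Q] > 0, and let H = (E[Q])^α (1-ρ)^{-α} (1-ρ_α)^{-1}. Then H_n ≤ H for all n and H_n → H as n → ∞; moreover (1/H)(H - H_{n_0}) ≤ (α(1-ρ_α)(n_0+1) + ρ_α)(max(ρ, ρ_α))^{n_0}. -/
open Filter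
open scoped Topology BigOperators

/-- With `H_n = (E Q)^α (1-ρ)^{-α} ∑_{k=0}^n ρ_α^k (1-ρ^{n-k})^α` and
`H = (E Q)^α (1-ρ)^{-α} (1-ρ_α)⁻¹`: `H_n ≤ H` for all `n`, `H_n → H`, and
`(1/H)(H - H_{n₀}) ≤ (α(1-ρ_α)(n₀+1) + ρ_α) (max ρ ρ_α)^{n₀}`. -/
theorem Hn_le_tendsto_and_error
    (α ρ ρα EQ : ℝ) (hα : 1 < α)
    (hρ0 : 0 < ρ) (hρ1 : ρ < 1) (hρα0 : 0 ≤ ρα) (hρα1 : ρα < 1) (hEQ : 0 < EQ)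
    (Hn : ℕ → ℝ) (H : ℝ)
    (hHn : ∀ n, Hn n =
      EQ ^ α * (1 - ρ) ^ (-α) * ∑ k ∈ Finset.range (n + 1), ρα ^ k * (1 - ρ ^ (n - k)) ^ α)
    (hH : H = EQ ^ α * (1 - ρ) ^ (-α) * (1 - ρα)⁻¹) :
    (∀ n, Hn n ≤ H) ∧ Tendsto Hn atTop (𝓝 H) ∧
      ∀ n₀ : ℕ, 1 ≤ n₀ →
        (1 / H) * (H - Hn n₀) ≤ (α * (1 - ρα) * (n₀ + 1) + ρα) * max ρ ρα ^ n₀ := by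
  set C : ℝ := EQ ^ α * (1 - ρ) ^ (-α) with hC
  have hCpos : 0 < C := by
    apply mul_pos (Real.rpow_pos_of_pos hEQ α) (Real.rpow_pos_of_pos (by linarith) _)
  set S : ℕ → ℝ := fun n => ∑ k ∈ Finset.range (n + 1), ρα ^ k * (1 - ρ ^ (n - k)) ^ α with hS
  have hρα1' : (0:ℝ) < 1 - ρα := by linarith
  set r : ℝ := max ρ ρα with hr
  have hr0 : 0 < r := lt_of_lt_of_le hρ0 (le_max_left _ _)
  have hr1 : r < 1 := max_lt hρ1 hρα1
  -- per-term facts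
  have hterm01 : ∀ m : ℕ, 0 ≤ 1 - ρ ^ m ∧ 1 - ρ ^ m ≤ 1 := by
    intro m
    constructor
    · have := pow_le_one₀ hρ0.le hρ1.le (n := m); linarith
    · have := pow_nonneg hρ0.le m; linarith
  have hterm1 : ∀ m : ℕ, (1 - ρ ^ m) ^ α ≤ 1 := fun m =>
    Real.rpow_le_one (hterm01 m).1 (hterm01 m).2 (by linarith)
  have hterm0 : ∀ m : ℕ, 0 ≤ (1 - ρ ^ m) ^ α := fun m =>
    Real.rpow_nonneg (hterm01 m).1 _
  -- Bernoulli: 1 - (1-x)^α ≤ α x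
  have hbern : ∀ m : ℕ, 1 - (1 - ρ ^ m) ^ α ≤ α * ρ ^ m := by
    intro m
    have h := one_add_mul_self_le_rpow_one_add (s := -(ρ ^ m))
      (by have := (hterm01 m).1; linarith) hα.le
    have : 1 + α * -(ρ ^ m) ≤ (1 - ρ ^ m) ^ α := by
      simpa [sub_eq_add_neg] using h
    linarith
  -- geometric sum identity
  have hgeom : ∀ n : ℕ, (1 - ρα) * ∑ k ∈ Finset.range (n + 1), ρα ^ k = 1 - ρα ^ (n + 1) := by
    intro n
    have := geom_sum_mul ρα (n + 1)
    nlinarith [this]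
  have hSsum_le : ∀ n, S n ≤ ∑ k ∈ Finset.range (n + 1), ρα ^ k := by
    intro n
    apply Finset.sum_le_sum
    intro k _
    have := hterm1 (n - k)
    nlinarith [pow_nonneg hρα0 k, hterm0 (n - k)]
  have hSle : ∀ n, S n ≤ (1 - ρα)⁻¹ := by
    intro n
    refine (hSsum_le n).trans ?_
    rw [inv_eq_one_div, le_div_iff₀ hρα1', mul_comm]
    have := hgeom n
    nlinarith [pow_nonneg hρα0 (n + 1)]
  have hHnS : ∀ n, Hn n = C * S n := fun n => hHn n
  have hHC : H = C * (1 - ρα)⁻¹ := hH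
  have hHpos : 0 < H := by rw [hHC]; positivity
  -- main per-n error bound
  have hkey : ∀ n : ℕ, 1 - (1 - ρα) * S n ≤ (α * (1 - ρα) * (n + 1) + ρα) * r ^ n := by
    intro n
    have hsplit : 1 - (1 - ρα) * S n
        = (1 - ρα) * (∑ k ∈ Finset.range (n + 1), ρα ^ k * (1 - (1 - ρ ^ (n - k)) ^ α))
          + ρα ^ (n + 1) := by
      have h1 : ∑ k ∈ Finset.range (n + 1), ρα ^ k * (1 - (1 - ρ ^ (n - k)) ^ α)
          = (∑ k ∈ Finset.range (n + 1), ρα ^ k) - S n := by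
        rw [hS, ← Finset.sum_sub_distrib]
        apply Finset.sum_congr rfl
        intro k _; ring
      rw [h1, mul_sub, hgeom n]; ring
    have hsum_le : (∑ k ∈ Finset.range (n + 1), ρα ^ k * (1 - (1 - ρ ^ (n - k)) ^ α))
        ≤ (n + 1) * (α * r ^ n) := by
      have : ∀ k ∈ Finset.range (n + 1),
          ρα ^ k * (1 - (1 - ρ ^ (n - k)) ^ α) ≤ α * r ^ n := by
        intro k hk
        have hkn : k ≤ n := Nat.lt_succ_iff.mp (Finset.mem_range.mp hk)
        have h1 : ρα ^ k * (1 - (1 - ρ ^ (n - k)) ^ α) ≤ ρα ^ k * (α * ρ ^ (n - k)) := by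
          apply mul_le_mul_of_nonneg_left (hbern (n - k)) (pow_nonneg hρα0 k)
        have h2 : ρα ^ k * ρ ^ (n - k) ≤ r ^ n := by
          calc ρα ^ k * ρ ^ (n - k) ≤ r ^ k * r ^ (n - k) :=
                mul_le_mul (pow_le_pow_left₀ hρα0 (le_max_right _ _) k)
                  (pow_le_pow_left₀ hρ0.le (le_max_left _ _) _)
                  (pow_nonneg hρ0.le _) (pow_nonneg hr0.le _)
            _ = r ^ n := by rw [← pow_add, Nat.add_sub_cancel' hkn]
        calc ρα ^ k * (1 - (1 - ρ ^ (n - k)) ^ α) ≤ ρα ^ k * (α * ρ ^ (n - k)) := h1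
          _ = α * (ρα ^ k * ρ ^ (n - k)) := by ring
          _ ≤ α * r ^ n := by nlinarith [h2]
      calc (∑ k ∈ Finset.range (n + 1), ρα ^ k * (1 - (1 - ρ ^ (n - k)) ^ α))
          ≤ ∑ _k ∈ Finset.range (n + 1), α * r ^ n := Finset.sum_le_sum this
        _ = (n + 1) * (α * r ^ n) := by
            rw [Finset.sum_const, Finset.card_range, nsmul_eq_mul]; push_cast; ring
    have htail : ρα ^ (n + 1) ≤ ρα * r ^ n := by
      rw [pow_succ']
      exact mul_le_mul_of_nonneg_left (pow_le_pow_left₀ hρα0 (le_max_right _ _) n) hρα0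
    rw [hsplit]
    have := mul_le_mul_of_nonneg_left hsum_le hρα1'.le
    nlinarith [this, htail]
  -- Part 1
  have hle : ∀ n, Hn n ≤ H := by
    intro n
    rw [hHnS n, hHC]
    exact mul_le_mul_of_nonneg_left (hSle n) hCpos.le
  -- error expression
  have herr : ∀ n, (1 / H) * (H - Hn n) = 1 - (1 - ρα) * S n := by
    intro n
    rw [hHnS n, hHC]
    field_simp
  refine ⟨hle, ?_, fun n₀ _ => by rw [herr n₀]; exact hkey n₀⟩
  -- tendsto via squeeze
  have hlow : ∀ n : ℕ, H - H * ((α * (1 - ρα) * (n + 1) + ρα) * r ^ n) ≤ Hn n := by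
    intro n
    have h := mul_le_mul_of_nonneg_left (hkey n) hHpos.le
    have hC' : H * (1 - ρα) = C := by rw [hHC]; field_simp
    have : H * ((1 - ρα) * S n) = Hn n := by
      rw [← mul_assoc, hC', hHnS n]
    nlinarith [h, this]
  have hlim : Tendsto (fun n : ℕ => H - H * ((α * (1 - ρα) * (n + 1) + ρα) * r ^ n))
      atTop (𝓝 H) := by
    have h1 : Tendsto (fun n : ℕ => (n : ℝ) * r ^ n) atTop (𝓝 0) := by
      simpa using tendsto_pow_const_mul_const_pow_of_lt_one 1 hr0.le hr1
    have h2 : Tendsto (fun n : ℕ => r ^ n) atTop (𝓝 0) :=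
      tendsto_pow_atTop_nhds_zero_of_lt_one hr0.le hr1
    have h3 : Tendsto (fun n : ℕ => (α * (1 - ρα) * (n + 1) + ρα) * r ^ n) atTop (𝓝 0) := by
      have : (fun n : ℕ => (α * (1 - ρα) * (n + 1) + ρα) * r ^ n)
          = fun n : ℕ => α * (1 - ρα) * ((n : ℝ) * r ^ n)
              + (α * (1 - ρα) + ρα) * r ^ n := by
        funext n; ring
      rw [this]
      simpa using ((h1.const_mul (α * (1 - ρα))).add (h2.const_mul (α * (1 - ρα) + ρα)))
    have := (h3.const_mul H).const_sub H
    simpa using this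
  exact tendsto_of_tendsto_of_tendsto_of_le_of_le hlim tendsto_const_nhds hlow hle
end

section
/- Suppose for some 0 < β ≤ 1 that E[|Q|^β] < ∞ and ρ_β = E[Σ_{i=1}^N C_i^β] < 1. Then the series R = Σ_{n=0}^∞ W_n converges almost surely, and E[|R|^β] < ∞. -/
/-!
Independence of each node from the earlier generations gives
`∑_{|l| = n} E[|Q_l Π_l|^β] = E[|Q|^β] ρ_β^n`, so `∑_n ∑_{|l| = n} |Q_l Π_l|^β` has expectation
`E[|Q|^β] / (1 - ρ_β) < ∞`. Since `x ↦ x^β` is subadditive for `β ≤ 1`, this sum dominates both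
`∑_n |W_n|^β` and `|R|^β`, and finiteness of `∑_n |W_n|^β` forces `∑_n |W_n| < ∞`.
-/

open MeasureTheory ProbabilityTheory Filter
open scoped ENNReal NNReal Topology

noncomputable section

/-- Product `Π` of the weights `C` along the branch leading to a node of the weighted
branching tree. Nodes are lists of child indices, written child-index-first:
the node `i :: l` is the `i`-th child of the node `l`, and `[]` is the root. -/
def pathWeight {Ω : Type*} (X : List ℕ → Ω → ℝ × (ℕ → ℝ)) : List ℕ → Ω → ℝ
  | [], _ => 1
  | (i :: l), ω => pathWeight X l ω * (X l ω).2 i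

/-- `W_n = ∑_{i ∈ A_n} Q_i Π_i`, the weighted sum over generation `n`.
(Offspring beyond the number of children `N` carry weight `C_i = 0`, so they do not
contribute; this encodes `N ∈ ℕ ∪ {∞}` through vanishing weights.) -/
def genSum {Ω : Type*} (X : List ℕ → Ω → ℝ × (ℕ → ℝ)) (n : ℕ) (ω : Ω) : ℝ :=
  ∑' l : {l : List ℕ // l.length = n}, (X l.1 ω).1 * pathWeight X l.1 ω

/-- `ρ_β = E[∑_{i=1}^N C_i^β]`, valued in `ℝ≥0∞`. -/
def rhoE {Ω : Type*} [MeasurableSpace Ω] (μ : Measure Ω) (C : ℕ → Ω → ℝ) (β : ℝ) : ℝ≥0∞ :=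
  ∫⁻ ω, ∑' i, ENNReal.ofReal (C i ω ^ β) ∂μ

/-- A positive slowly varying function (positive on `[1, ∞)`, so that `1/L` is
locally bounded there). -/
def SlowlyVarying (L : ℝ → ℝ) : Prop :=
  (∀ x, 1 ≤ x → 0 < L x) ∧ ∀ c, 0 < c → Tendsto (fun x => L (c * x) / L x) atTop (𝓝 1)

namespace ENNReal

theorem rpow_finsetSum_le_sum_rpow {ι : Type*} (s : Finset ι) (a : ι → ℝ≥0∞) {p : ℝ}
    (hp0 : 0 < p) (hp1 : p ≤ 1) : (∑ i ∈ s, a i) ^ p ≤ ∑ i ∈ s, a i ^ p := by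
  classical
  induction s using Finset.induction_on with
  | empty => simp [zero_rpow_of_pos hp0]
  | insert j s hj ih =>
    rw [Finset.sum_insert hj, Finset.sum_insert hj]
    exact (rpow_add_le_add_rpow _ _ hp0.le hp1).trans (by gcongr)

theorem rpow_tsum_le_tsum_rpow {ι : Type*} (a : ι → ℝ≥0∞) {p : ℝ} (hp0 : 0 < p) (hp1 : p ≤ 1) :
    (∑' i, a i) ^ p ≤ ∑' i, a i ^ p :=
  le_of_tendsto' ((continuous_rpow_const.tendsto _).comp ENNReal.summable.hasSum) fun s =>
    (rpow_finsetSum_le_sum_rpow s a hp0 hp1).trans (ENNReal.sum_le_tsum s)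

end ENNReal

theorem ofReal_abs_rpow_eq_enorm_rpow (x : ℝ) {p : ℝ} (hp : 0 ≤ p) :
    ENNReal.ofReal (|x| ^ p) = ‖x‖ₑ ^ p := by
  rw [Real.enorm_eq_ofReal_abs, ENNReal.ofReal_rpow_of_nonneg (abs_nonneg x) hp]

section Subadditivity

variable {ι E : Type*} [NormedAddCommGroup E] {p : ℝ}

theorem enorm_tsum_rpow_le_tsum_enorm_rpow (f : ι → E) (hp0 : 0 < p) (hp1 : p ≤ 1) :
    ‖∑' i, f i‖ₑ ^ p ≤ ∑' i, ‖f i‖ₑ ^ p :=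
  (ENNReal.rpow_le_rpow enorm_tsum_le_tsum_enorm hp0.le).trans
    (ENNReal.rpow_tsum_le_tsum_rpow _ hp0 hp1)

theorem Summable.of_tsum_enorm_rpow_ne_top [CompleteSpace E] {f : ι → E} (hp0 : 0 < p)
    (hp1 : p ≤ 1) (hf : ∑' i, ‖f i‖ₑ ^ p ≠ ⊤) : Summable f := by
  refine Summable.of_enorm fun htop => hf ?_
  rw [← top_le_iff, ← ENNReal.top_rpow_of_pos hp0, ← htop]
  exact ENNReal.rpow_tsum_le_tsum_rpow _ hp0 hp1

end Subadditivity

def List.consLengthEquiv (α : Type*) (n : ℕ) :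
    α × {l : List α // l.length = n} ≃ {l : List α // l.length = n + 1} where
  toFun p := ⟨p.1 :: p.2.1, by simp [p.2.2]⟩
  invFun l := (l.1.head (List.ne_nil_of_length_eq_add_one l.2), ⟨l.1.tail, by simp [l.2]⟩)
  left_inv p := by simp
  right_inv := by
    rintro ⟨_ | ⟨a, l⟩, h⟩
    · simp at h
    · rfl

section WeightedBranchingTree

variable {Ω : Type*} {X : List ℕ → Ω → ℝ × (ℕ → ℝ)}

theorem measurable_pathWeight_of_length_lt (l : List ℕ) :
    Measurable[⨆ m ∈ {m : List ℕ | m.length < l.length},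
      MeasurableSpace.comap (X m) inferInstance] (pathWeight X l) := by
  induction l with
  | nil => exact measurable_const
  | cons i l ih =>
    have hle : (⨆ m ∈ {m : List ℕ | m.length < l.length},
        MeasurableSpace.comap (X m) inferInstance) ≤
        ⨆ m ∈ {m : List ℕ | m.length < (i :: l).length},
          MeasurableSpace.comap (X m) inferInstance :=
      biSup_mono fun m (hm : m.length < l.length) => by
        simp only [Set.mem_ofPred_eq, List.length_cons]; omega
    have hX : MeasurableSpace.comap (X l) inferInstance ≤
        ⨆ m ∈ {m : List ℕ | m.length < (i :: l).length},
          MeasurableSpace.comap (X m) inferInstance :=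
      le_iSup₂ (f := fun m (_ : m ∈ {m : List ℕ | m.length < (i :: l).length}) =>
        MeasurableSpace.comap (X m) inferInstance) l (by simp)
    exact (ih.mono hle le_rfl).mul
      ((measurable_pi_apply i).comp (measurable_snd.comp ((comap_measurable (X l)).mono hX le_rfl)))

variable [MeasurableSpace Ω] {μ : Measure Ω}

theorem measurable_pathWeight (hmeas : ∀ l, Measurable (X l)) (l : List ℕ) :
    Measurable (pathWeight X l) :=
  (measurable_pathWeight_of_length_lt l).mono (iSup₂_le fun m _ => (hmeas m).comap_le) le_rfl

/-- The node variable `X l` is independent of the earlier generations, which determine the path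
weight of `l`. -/
theorem lintegral_comp_mul_comp_pathWeight (hmeas : ∀ l, Measurable (X l))
    (hindep : iIndepFun X μ) (hident : ∀ l, μ.map (X l) = μ.map (X []))
    {F : ℝ × (ℕ → ℝ) → ℝ≥0∞} {g : ℝ → ℝ≥0∞} (hF : Measurable F) (hg : Measurable g)
    (l : List ℕ) :
    ∫⁻ ω, F (X l ω) * g (pathWeight X l ω) ∂μ
      = (∫⁻ ω, F (X [] ω) ∂μ) * ∫⁻ ω, g (pathWeight X l ω) ∂μ := by
  have hind := indep_iSup_of_disjoint (fun m => (hmeas m).comap_le)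
    ((iIndepFun_iff_iIndep _ _ _).1 hindep)
    (Set.disjoint_singleton_left.2 (lt_irrefl l.length) :
      Disjoint {l} {m : List ℕ | m.length < l.length})
  have hXl : Measurable[⨆ m ∈ ({l} : Set (List ℕ)),
      MeasurableSpace.comap (X m) inferInstance] (X l) :=
    (comap_measurable (X l)).mono (le_iSup₂ (f := fun m (_ : m ∈ ({l} : Set (List ℕ))) =>
      MeasurableSpace.comap (X m) inferInstance) l rfl) le_rfl
  rw [lintegral_mul_eq_lintegral_mul_lintegral_of_independent_measurableSpace
      (f := fun ω => F (X l ω)) (g := fun ω => g (pathWeight X l ω))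
      (iSup₂_le fun m _ => (hmeas m).comap_le) (iSup₂_le fun m _ => (hmeas m).comap_le) hind
      (hF.comp hXl) (hg.comp (measurable_pathWeight_of_length_lt l)),
    ← lintegral_map hF (hmeas l), hident l, lintegral_map hF (hmeas [])]

theorem tsum_lintegral_enorm_pathWeight_rpow [IsProbabilityMeasure μ]
    (hmeas : ∀ l, Measurable (X l)) (hindep : iIndepFun X μ)
    (hident : ∀ l, μ.map (X l) = μ.map (X [])) {β : ℝ} (hβ : 0 ≤ β) (n : ℕ) :
    ∑' l : {l : List ℕ // l.length = n}, ∫⁻ ω, ‖pathWeight X l ω‖ₑ ^ β ∂μ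
      = (∫⁻ ω, ∑' i, ‖(X [] ω).2 i‖ₑ ^ β ∂μ) ^ n := by
  induction n with
  | zero =>
    rw [tsum_eq_single (⟨[], rfl⟩ : {l : List ℕ // l.length = 0}) fun l hl =>
      absurd (Subtype.ext (List.length_eq_zero_iff.1 l.2)) hl]
    simp [pathWeight]
  | succ n ih =>
    set F : ℝ × (ℕ → ℝ) → ℝ≥0∞ := fun x => ∑' i, ‖x.2 i‖ₑ ^ β
    have hF : Measurable F := Measurable.tsum fun i =>
      ((measurable_pi_apply i).comp measurable_snd).enorm.pow_const β
    have hchildren (l : List ℕ) : ∑' i, ∫⁻ ω, ‖pathWeight X (i :: l) ω‖ₑ ^ β ∂μ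
        = (∫⁻ ω, F (X [] ω) ∂μ) * ∫⁻ ω, ‖pathWeight X l ω‖ₑ ^ β ∂μ := by
      rw [← lintegral_comp_mul_comp_pathWeight hmeas hindep hident hF
          (measurable_enorm.pow_const β) l, ← lintegral_tsum fun i =>
          ((measurable_pathWeight hmeas (i :: l)).enorm.pow_const β).aemeasurable]
      refine lintegral_congr fun ω => ?_
      simp only [pathWeight, enorm_mul, ENNReal.mul_rpow_of_nonneg _ _ hβ, F,
        ENNReal.tsum_mul_left, mul_comm]
    calc ∑' l : {l : List ℕ // l.length = n + 1}, ∫⁻ ω, ‖pathWeight X l ω‖ₑ ^ β ∂μ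
        = ∑' p : ℕ × {l : List ℕ // l.length = n},
            ∫⁻ ω, ‖pathWeight X (p.1 :: p.2.1) ω‖ₑ ^ β ∂μ :=
          ((List.consLengthEquiv ℕ n).tsum_eq _).symm
      _ = ∑' l : {l : List ℕ // l.length = n}, ∑' i,
            ∫⁻ ω, ‖pathWeight X (i :: l.1) ω‖ₑ ^ β ∂μ := by
          rw [ENNReal.tsum_prod', ENNReal.tsum_comm]
      _ = (∫⁻ ω, F (X [] ω) ∂μ) ^ (n + 1) := by
          simp_rw [hchildren, ENNReal.tsum_mul_left, ih, pow_succ']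
          rfl

theorem lintegral_tsum_enorm_rpow_generation [IsProbabilityMeasure μ]
    (hmeas : ∀ l, Measurable (X l)) (hindep : iIndepFun X μ)
    (hident : ∀ l, μ.map (X l) = μ.map (X [])) {β : ℝ} (hβ : 0 ≤ β) (n : ℕ) :
    ∫⁻ ω, ∑' l : {l : List ℕ // l.length = n}, ‖(X l ω).1 * pathWeight X l ω‖ₑ ^ β ∂μ
      = (∫⁻ ω, ‖(X [] ω).1‖ₑ ^ β ∂μ) * (∫⁻ ω, ∑' i, ‖(X [] ω).2 i‖ₑ ^ β ∂μ) ^ n := by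
  have hterm (l : List ℕ) : Measurable fun ω => ‖(X l ω).1 * pathWeight X l ω‖ₑ ^ β :=
    ((hmeas l).fst.mul (measurable_pathWeight hmeas l)).enorm.pow_const β
  rw [lintegral_tsum fun l : {l : List ℕ // l.length = n} => (hterm l).aemeasurable,
    ← tsum_lintegral_enorm_pathWeight_rpow hmeas hindep hident hβ n, ← ENNReal.tsum_mul_left]
  refine tsum_congr fun l => ?_
  simp_rw [enorm_mul, ENNReal.mul_rpow_of_nonneg _ _ hβ]
  exact lintegral_comp_mul_comp_pathWeight hmeas hindep hident
    (measurable_fst.enorm.pow_const β) (measurable_enorm.pow_const β) l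

end WeightedBranchingTree

/-- If `E[|Q|^β] < ∞` and `ρ_β < 1` for some `0 < β ≤ 1`, then `R = ∑_{n=0}^∞ W_n`
converges almost surely, and `E[|R|^β] < ∞`. -/
theorem series_Wn_converges
{Ω : Type*} [MeasurableSpace Ω] (μ : Measure Ω) [IsProbabilityMeasure μ]
    (X : List ℕ → Ω → ℝ × (ℕ → ℝ)) (Q : Ω → ℝ) (C : ℕ → Ω → ℝ)
    (hroot : ∀ ω, X [] ω = (Q ω, fun i => C i ω))
    (hmeas : ∀ l, Measurable (X l))
    (hindep : iIndepFun X μ)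
    (hident : ∀ l, μ.map (X l) = μ.map (X []))
    (hCpos : ∀ l i ω, 0 ≤ (X l ω).2 i)
    (β : ℝ) (hβ0 : 0 < β) (hβ1 : β ≤ 1)
    (hQmom : ∫⁻ ω, ENNReal.ofReal (|Q ω| ^ β) ∂μ < ⊤)
    (hrho : rhoE μ C β < 1) :
    (∀ᵐ ω ∂μ, Summable fun n => genSum X n ω) ∧
      ∫⁻ ω, ENNReal.ofReal (|∑' n, genSum X n ω| ^ β) ∂μ < ⊤ := by
  set B : ℕ → Ω → ℝ≥0∞ := fun n ω =>
    ∑' l : {l : List ℕ // l.length = n}, ‖(X l ω).1 * pathWeight X l ω‖ₑ ^ β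
  have hB (n : ℕ) : Measurable (B n) := Measurable.tsum fun l =>
    ((hmeas l.1).fst.mul (measurable_pathWeight hmeas l.1)).enorm.pow_const β
  have hQ : ∫⁻ ω, ‖(X [] ω).1‖ₑ ^ β ∂μ = ∫⁻ ω, ENNReal.ofReal (|Q ω| ^ β) ∂μ := by
    simp_rw [hroot, ofReal_abs_rpow_eq_enorm_rpow _ hβ0.le]
  have hρ : ∫⁻ ω, ∑' i, ‖(X [] ω).2 i‖ₑ ^ β ∂μ = rhoE μ C β :=
    lintegral_congr fun ω => tsum_congr fun i => by
      rw [← ofReal_abs_rpow_eq_enorm_rpow _ hβ0.le, abs_of_nonneg (hCpos [] i ω), hroot]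
  have htotal : ∫⁻ ω, ∑' n, B n ω ∂μ < ⊤ := by
    rw [lintegral_tsum fun n => (hB n).aemeasurable]
    simp_rw [B, lintegral_tsum_enorm_rpow_generation hmeas hindep hident hβ0.le, hQ, hρ,
      ENNReal.tsum_mul_left, ENNReal.tsum_geometric]
    exact ENNReal.mul_lt_top hQmom (ENNReal.inv_lt_top.2 (tsub_pos_of_lt hrho))
  have hgen (ω : Ω) : ∑' n, ‖genSum X n ω‖ₑ ^ β ≤ ∑' n, B n ω :=
    ENNReal.tsum_le_tsum fun n => enorm_tsum_rpow_le_tsum_enorm_rpow _ hβ0 hβ1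
  refine ⟨?_, ?_⟩
  · filter_upwards [ae_lt_top (Measurable.tsum hB) htotal.ne] with ω hω
    exact .of_tsum_enorm_rpow_ne_top hβ0 hβ1 ((hgen ω).trans_lt hω).ne
  · calc ∫⁻ ω, ENNReal.ofReal (|∑' n, genSum X n ω| ^ β) ∂μ
        = ∫⁻ ω, ‖∑' n, genSum X n ω‖ₑ ^ β ∂μ := by
          simp_rw [ofReal_abs_rpow_eq_enorm_rpow _ hβ0.le]
      _ ≤ ∫⁻ ω, ∑' n, B n ω ∂μ := lintegral_mono fun ω =>
          (enorm_tsum_rpow_le_tsum_enorm_rpow _ hβ0 hβ1).trans (hgen ω)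
      _ < ⊤ := htotal
end
end
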